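/- Let f and g be distinct monomials of R such that neither f nor g is divisible by any monomial X_i·X_j with i, j ∈ {1,…,p−1}, nor by any monomial X_{b+i}·X_p^a with i ∈ {0,…,p−b}. Then ω(f) ≠ ω(g); equivalently f − g ∉ ℘. (This is the content of the statement that 𝒢' = {φ(i,j)} ∪ {ψ(b,i)} is a Gröbner basis of ℘ with respect to the order >_R: the monomials outside the monomial ideal generated by the leading terms of 𝒢' represent pairwise distinct elements of R/℘.) -/

import Mathlib

open MvPolynomial
open Fin.NatCast

/-- The defining ideal `℘` of the monomial curve: the kernel of the `K`-algebra map
`K[X_0,…,X_p] → K[T]`, `X_i ↦ T^{m_i}`. -/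
noncomputable def curveIdeal (K : Type*) [Field K] (p : ℕ) (m : ℕ → ℕ) :
    Ideal (MvPolynomial (Fin (p + 1)) K) :=
  RingHom.ker (MvPolynomial.aeval (R := K)
    (fun k : Fin (p + 1) => (Polynomial.X : Polynomial K) ^ m (k : ℕ))).toRingHom

/-! Write `ω(X^γ) = |γ| m₀ + T(γ) d` with `|γ| = ∑ γₖ` and `T(γ) = ∑ k γₖ`. A standard monomial is
`X_0^γ₀ X_c^ε X_p^e` with `1 ≤ c < p`, `ε ≤ 1`, `e ≤ a`, and `e < a` as soon as `ε = 1` and `c ≥ b`;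
hence `T(γ) = εc + ep < ap + b = m₀`. Since `gcd(m₀, d) = 1`, the weight therefore determines
`|γ|` and `T(γ)`; `T(γ)` determines `εc` and `e` as base-`p` digits, and `|γ|` then gives `γ₀`. -/

theorem Nat.eq_and_eq_of_mul_add_mul_eq {m d S S' s t : ℕ} (hmd : Nat.gcd m d = 1)
    (hs : s < m) (ht : t < m) (h : S * m + s * d = S' * m + t * d) : S = S' ∧ s = t := by
  have hmod : s * d ≡ t * d [MOD m] := by
    simpa only [Nat.ModEq, Nat.mul_add_mod_self_right] using congrArg (· % m) h
  have hst : s = t := (Nat.ModEq.cancel_right_of_coprime hmd hmod).eq_of_lt_of_lt hs ht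
  subst hst
  exact ⟨Nat.eq_of_mul_eq_mul_right (by omega) (Nat.add_right_cancel h), rfl⟩

theorem Finsupp.single_add_single_le_iff {σ : Type*} {i j : σ} (hij : i ≠ j) (x y : ℕ)
    (f : σ →₀ ℕ) : Finsupp.single i x + Finsupp.single j y ≤ f ↔ x ≤ f i ∧ y ≤ f j := by
  rw [Finsupp.le_def]
  refine ⟨fun h => ⟨by simpa [hij] using h i, by simpa [hij.symm] using h j⟩, ?_⟩
  rintro ⟨hi, hj⟩ t
  rcases eq_or_ne t i with rfl | hti
  · simpa [hij] using hi
  rcases eq_or_ne t j with rfl | htj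
  · simpa [hij.symm] using hj
  simp [hti.symm, htj.symm]

theorem X_mul_X_pow_dvd_monomial_one_iff {K σ : Type*} [Field K] (i j : σ) (n : ℕ)
    (γ : σ →₀ ℕ) :
    X i * X j ^ n ∣ monomial γ (1 : K) ↔ Finsupp.single i 1 + Finsupp.single j n ≤ γ := by
  rw [X, X_pow_eq_monomial, monomial_mul, one_mul, monomial_dvd_monomial]
  simp

theorem X_mul_X_pow_dvd_monomial_one_iff_of_ne {K σ : Type*} [Field K] {i j : σ} (hij : i ≠ j)
    (n : ℕ) (γ : σ →₀ ℕ) : X i * X j ^ n ∣ monomial γ (1 : K) ↔ 1 ≤ γ i ∧ n ≤ γ j := by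
  rw [X_mul_X_pow_dvd_monomial_one_iff, Finsupp.single_add_single_le_iff hij]

theorem X_mul_X_pow_self_dvd_monomial_one_iff {K σ : Type*} [Field K] (i : σ) (n : ℕ)
    (γ : σ →₀ ℕ) : X i * X i ^ n ∣ monomial γ (1 : K) ↔ 1 + n ≤ γ i := by
  rw [X_mul_X_pow_dvd_monomial_one_iff, ← Finsupp.single_add, Finsupp.single_le_iff]

section CurveIdeal

variable {K : Type*} [Field K] {p : ℕ}

theorem aeval_X_pow_monomial_one (m : ℕ → ℕ) (γ : Fin (p + 1) →₀ ℕ) :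
    aeval (R := K) (fun k : Fin (p + 1) => (Polynomial.X : Polynomial K) ^ m k) (monomial γ 1) =
      Polynomial.X ^ ∑ k, γ k * m k := by
  simp_rw [aeval_monomial, map_one, one_mul, Finsupp.prod_pow, ← pow_mul,
    Finset.prod_pow_eq_pow_sum, mul_comm]

theorem monomial_sub_monomial_mem_curveIdeal_iff (m : ℕ → ℕ) (α β : Fin (p + 1) →₀ ℕ) :
    monomial α 1 - monomial β 1 ∈ curveIdeal K p m ↔
      ∑ k, α k * m k = ∑ k, β k * m k := by
  rw [curveIdeal, RingHom.mem_ker, AlgHom.toRingHom_eq_coe, RingHom.coe_coe, map_sub,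
    aeval_X_pow_monomial_one, aeval_X_pow_monomial_one, sub_eq_zero,
    Polynomial.X_pow_eq_monomial, Polynomial.X_pow_eq_monomial,
    Polynomial.monomial_left_inj one_ne_zero]

end CurveIdeal

theorem sum_mul_val_eq_of_middle {p c : ℕ} {γ : Fin (p + 1) →₀ ℕ} (hc : c < p)
    (hγ : ∀ k : Fin (p + 1), 1 ≤ (k : ℕ) → (k : ℕ) < p → γ k = if (k : ℕ) = c then 1 else 0) :
    ∑ k, γ k * (k : ℕ) = c + γ (Fin.last p) * p := by
  have hterm : ∀ k : Fin (p + 1), γ k * (k : ℕ) =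
      (if (⟨c, by omega⟩ : Fin (p + 1)) = k then c else 0) +
        if Fin.last p = k then γ (Fin.last p) * p else 0 := by
    intro k
    simp only [Fin.ext_iff, Fin.val_last]
    by_cases hk0 : (k : ℕ) = 0
    · rw [hk0]
      split_ifs <;> omega
    by_cases hkp : (k : ℕ) < p
    · rw [hγ k (by omega) hkp]
      split_ifs <;> omega
    · obtain rfl : k = Fin.last p := Fin.ext (by simp; omega)
      simp [hc.ne]
  simp [Finset.sum_congr rfl fun k _ => hterm k, Finset.sum_add_distrib]

/-- Exponent vectors of the monomials divisible by no `X_i X_j` with `1 ≤ i, j < p` and by no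
`X_k X_p^a` with `b ≤ k ≤ p`. -/
structure IsStandardExponent (p a b : ℕ) (γ : Fin (p + 1) →₀ ℕ) : Prop where
  le_one : ∀ k : Fin (p + 1), 1 ≤ (k : ℕ) → (k : ℕ) < p → γ k ≤ 1
  eq_zero_or_eq_zero : ∀ k l : Fin (p + 1), 1 ≤ (k : ℕ) → (k : ℕ) < p → 1 ≤ (l : ℕ) →
    (l : ℕ) < p → k ≠ l → γ k = 0 ∨ γ l = 0
  last_le : γ (Fin.last p) ≤ a
  last_lt : ∀ k : Fin (p + 1), b ≤ (k : ℕ) → (k : ℕ) < p → γ k ≠ 0 → γ (Fin.last p) < a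

namespace IsStandardExponent

variable {p a b : ℕ} {γ : Fin (p + 1) →₀ ℕ}

theorem of_not_dvd {K : Type*} [Field K] (hbp : b ≤ p)
    (h₁ : ∀ i j : ℕ, 1 ≤ i → i < p → 1 ≤ j → j < p →
      ¬ X (i : Fin (p + 1)) * X (j : Fin (p + 1)) ∣ monomial γ (1 : K))
    (h₂ : ∀ i : ℕ, i ≤ p - b →
      ¬ X ((b + i : ℕ) : Fin (p + 1)) * X (p : Fin (p + 1)) ^ a ∣ monomial γ (1 : K)) :
    IsStandardExponent p a b γ where
  le_one k hk1 hkp := by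
    have := h₁ k k hk1 hkp hk1 hkp
    rw [Fin.cast_val_eq_self] at this
    nth_rw 2 [← pow_one (X k)] at this
    rw [X_mul_X_pow_self_dvd_monomial_one_iff] at this
    omega
  eq_zero_or_eq_zero k l hk1 hkp hl1 hlp hkl := by
    have := h₁ k l hk1 hkp hl1 hlp
    rw [Fin.cast_val_eq_self, Fin.cast_val_eq_self, ← pow_one (X l),
      X_mul_X_pow_dvd_monomial_one_iff_of_ne hkl] at this
    omega
  last_le := by
    have := h₂ (p - b) le_rfl
    rw [Nat.add_sub_cancel' hbp, Fin.natCast_eq_last, X_mul_X_pow_self_dvd_monomial_one_iff] at this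
    omega
  last_lt k hbk hkp hk := by
    have := h₂ (k - b) (by omega)
    rw [Nat.add_sub_cancel' hbk, Fin.cast_val_eq_self, Fin.natCast_eq_last,
      X_mul_X_pow_dvd_monomial_one_iff_of_ne (Fin.ne_of_val_ne (by simp; omega))] at this
    omega

theorem exists_middle_index (h : IsStandardExponent p a b γ) (hp : 0 < p) :
    ∃ c < p, ∀ k : Fin (p + 1), 1 ≤ (k : ℕ) → (k : ℕ) < p →
      γ k = if (k : ℕ) = c then 1 else 0 := by
  by_cases hex : ∃ c : Fin (p + 1), 1 ≤ (c : ℕ) ∧ (c : ℕ) < p ∧ γ c ≠ 0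
  · obtain ⟨c, hc1, hcp, hc⟩ := hex
    refine ⟨c, hcp, fun k hk1 hkp => ?_⟩
    rcases eq_or_ne k c with rfl | hkc
    · have := h.le_one k hk1 hkp
      rw [if_pos rfl]
      omega
    · rw [if_neg (Fin.val_ne_of_ne hkc)]
      exact (h.eq_zero_or_eq_zero k c hk1 hkp hc1 hcp hkc).resolve_right hc
  · push Not at hex
    exact ⟨0, hp, fun k hk1 hkp => by rw [if_neg (by omega)]; exact hex k hk1 hkp⟩

theorem sum_mul_val_lt (h : IsStandardExponent p a b γ) (hp : 0 < p) (hb : 1 ≤ b) :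
    ∑ k, γ k * (k : ℕ) < a * p + b := by
  obtain ⟨c, hcp, hγ⟩ := h.exists_middle_index hp
  rw [sum_mul_val_eq_of_middle hcp hγ]
  by_cases hbc : b ≤ c
  · have hc : γ ⟨c, by omega⟩ ≠ 0 := by simp [hγ ⟨c, by omega⟩ (by simp; omega) hcp]
    have := h.last_lt ⟨c, by omega⟩ hbc hcp hc
    nlinarith
  · nlinarith [h.last_le]

theorem eq_of_sum_eq {α β : Fin (p + 1) →₀ ℕ} (hα : IsStandardExponent p a b α)
    (hβ : IsStandardExponent p a b β) (hp : 0 < p) (hdeg : ∑ k, α k = ∑ k, β k)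
    (hval : ∑ k, α k * (k : ℕ) = ∑ k, β k * (k : ℕ)) : α = β := by
  obtain ⟨c, hcp, hαc⟩ := hα.exists_middle_index hp
  obtain ⟨c', hc'p, hβc⟩ := hβ.exists_middle_index hp
  rw [sum_mul_val_eq_of_middle hcp hαc, sum_mul_val_eq_of_middle hc'p hβc] at hval
  -- base-`p` digits are unique
  obtain ⟨hlast, rfl⟩ := Nat.eq_and_eq_of_mul_add_mul_eq (Nat.gcd_one_right p) hcp hc'p
    (by linarith : α (Fin.last p) * p + c * 1 = β (Fin.last p) * p + c' * 1)
  have hsucc : ∀ i : Fin p, α i.succ = β i.succ := by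
    intro i
    by_cases hi : (i : ℕ) + 1 < p
    · rw [hαc _ (by simp) (by simpa using hi), hβc _ (by simp) (by simpa using hi)]
    · rw [show i.succ = Fin.last p from Fin.ext (by simp; omega), hlast]
  have hzero : α 0 = β 0 := by
    rw [Fin.sum_univ_succ, Fin.sum_univ_succ, Finset.sum_congr rfl fun i _ => hsucc i] at hdeg
    omega
  ext k
  cases k using Fin.cases with
  | zero => exact hzero
  | succ i => exact hsucc i

end IsStandardExponent

theorem standard_monomials_distinct_weights_general
    (K : Type*) [Field K]
    (p d a b : ℕ) (hb1 : 1 ≤ b) (hbp : b ≤ p)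
    (m : ℕ → ℕ) (hm : ∀ i, m i = a * p + b + i * d)
    (hgcd : Nat.gcd (m 0) d = 1)
    (α β : Fin (p + 1) →₀ ℕ) (f g : MvPolynomial (Fin (p + 1)) K)
    (hf : f = monomial α 1) (hg : g = monomial β 1) (hfg : f ≠ g)
    (hdvd1 : ∀ i j : ℕ, 1 ≤ i → i < p → 1 ≤ j → j < p →
      ¬ (X ((i : ℕ) : Fin (p + 1)) * X ((j : ℕ) : Fin (p + 1)) ∣ f) ∧
      ¬ (X ((i : ℕ) : Fin (p + 1)) * X ((j : ℕ) : Fin (p + 1)) ∣ g))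
    (hdvd2 : ∀ i : ℕ, i ≤ p - b →
      ¬ (X ((b + i : ℕ) : Fin (p + 1)) * (X ((p : ℕ) : Fin (p + 1))) ^ a ∣ f) ∧
      ¬ (X ((b + i : ℕ) : Fin (p + 1)) * (X ((p : ℕ) : Fin (p + 1))) ^ a ∣ g)) :
    (∑ k : Fin (p + 1), α k * m (k : ℕ)) ≠ (∑ k : Fin (p + 1), β k * m (k : ℕ)) ∧
      f - g ∉ curveIdeal K p m := by
  subst hf hg
  have hα : IsStandardExponent p a b α := .of_not_dvd hbp
    (fun i j hi hi' hj hj' => (hdvd1 i j hi hi' hj hj').1) (fun i hi => (hdvd2 i hi).1)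
  have hβ : IsStandardExponent p a b β := .of_not_dvd hbp
    (fun i j hi hi' hj hj' => (hdvd1 i j hi hi' hj hj').2) (fun i hi => (hdvd2 i hi).2)
  have hweight : ∀ γ : Fin (p + 1) →₀ ℕ,
      ∑ k, γ k * m k = (∑ k, γ k) * (a * p + b) + (∑ k, γ k * (k : ℕ)) * d := by
    intro γ
    simp only [hm, Finset.sum_mul, ← Finset.sum_add_distrib]
    exact Finset.sum_congr rfl fun k _ => by ring
  have hcop : Nat.gcd (a * p + b) d = 1 := by rwa [hm, zero_mul, add_zero] at hgcd
  have hne : ∑ k, α k * m k ≠ ∑ k, β k * m k := by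
    rw [hweight, hweight]
    intro h
    obtain ⟨hdeg, hval⟩ := Nat.eq_and_eq_of_mul_add_mul_eq hcop
      (hα.sum_mul_val_lt (by omega) hb1) (hβ.sum_mul_val_lt (by omega) hb1) h
    exact hfg (by rw [hα.eq_of_sum_eq hβ (by omega) hdeg hval])
  exact ⟨hne, (monomial_sub_monomial_mem_curveIdeal_iff m α β).not.mpr hne⟩

/-- If `f ≠ g` are monomials of `R`, neither divisible by any `X_i·X_j` with
`i, j ∈ {1,…,p−1}` nor by any `X_{b+i}·X_p^a` with `i ∈ {0,…,p−b}`, then `ω(f) ≠ ω(g)`;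
equivalently `f − g ∉ ℘`. -/
theorem standard_monomials_distinct_weights
    (K : Type*) [Field K]
    (p d a b : ℕ) (hp : 2 ≤ p) (hd : 1 ≤ d) (ha : 1 ≤ a) (hb1 : 1 ≤ b) (hbp : b ≤ p)
    (m : ℕ → ℕ) (hm : ∀ i, m i = a * p + b + i * d)
    (hgcd : Nat.gcd (m 0) d = 1)
    (hmin : ∀ i ≤ p, m i ∉ AddSubmonoid.closure {x : ℕ | ∃ j ≤ p, j ≠ i ∧ x = m j})
    (α β : Fin (p + 1) →₀ ℕ) (f g : MvPolynomial (Fin (p + 1)) K)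
    (hf : f = monomial α 1) (hg : g = monomial β 1) (hfg : f ≠ g)
    (hdvd1 : ∀ i j : ℕ, 1 ≤ i → i < p → 1 ≤ j → j < p →
      ¬ (X ((i : ℕ) : Fin (p + 1)) * X ((j : ℕ) : Fin (p + 1)) ∣ f) ∧
      ¬ (X ((i : ℕ) : Fin (p + 1)) * X ((j : ℕ) : Fin (p + 1)) ∣ g))
    (hdvd2 : ∀ i : ℕ, i ≤ p - b →
      ¬ (X ((b + i : ℕ) : Fin (p + 1)) * (X ((p : ℕ) : Fin (p + 1))) ^ a ∣ f) ∧
      ¬ (X ((b + i : ℕ) : Fin (p + 1)) * (X ((p : ℕ) : Fin (p + 1))) ^ a ∣ g)) :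
    (∑ k : Fin (p + 1), α k * m (k : ℕ)) ≠ (∑ k : Fin (p + 1), β k * m (k : ℕ)) ∧
      f - g ∉ curveIdeal K p m :=
  standard_monomials_distinct_weights_general K p d a b hb1 hbp m hm hgcd α β f g hf hg hfg hdvd1
    hdvd2
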